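/- arXiv:2508.03419 — 9 statements merged into one kernel-verified Lean document; each statement's English description precedes it below -/
import Mathlib

section
/- Let A be a symmetric positive definite real n×n matrix, b ∈ ℝⁿ with b ≠ 0, b² := bᵀA⁻¹b, and let κ, ρ, ν be real numbers with ν ≠ 0 and 1 − b²κ ≠ 0. Set Ā := e^{2ρ}(A − κ·b bᵀ), b̄ := ν·b, and b̄² := b̄ᵀĀ⁻¹b̄. Then for every y ∈ ℝⁿ, yᵀĀy − (b̄ᵀy)²/b̄² = e^{2ρ}·(yᵀAy − (bᵀy)²/b²); that is, the quadratic form α² − β²/b² is conformally invariant under β-deformation. -/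
open Matrix

lemma my_mulVec_vecMulVec {n : ℕ} (u v y : Fin n → ℝ) :
    vecMulVec u v *ᵥ y = (v ⬝ᵥ y) • u := by
  ext i
  simp [mulVec, dotProduct, vecMulVec_apply, Finset.mul_sum, mul_comm, mul_left_comm]

lemma my_mul_vecMulVec {n : ℕ} (M : Matrix (Fin n) (Fin n) ℝ) (u v : Fin n → ℝ) :
    M * vecMulVec u v = vecMulVec (M *ᵥ u) v := by
  ext i j
  simp only [mul_apply, vecMulVec_apply, mulVec, dotProduct, Finset.sum_mul]
  exact Finset.sum_congr rfl fun k _ => by ring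

lemma my_vecMulVec_mul {n : ℕ} (u v : Fin n → ℝ) (M : Matrix (Fin n) (Fin n) ℝ) :
    vecMulVec u v * M = vecMulVec u (v ᵥ* M) := by
  ext i j
  simp [mul_apply, vecMulVec_apply, vecMul, dotProduct, Finset.mul_sum, mul_assoc]

/-- The quadratic form α² − β²/b² is conformally invariant under β-deformation. -/
theorem stmt2 {n : ℕ} (A : Matrix (Fin n) (Fin n) ℝ) (hA : A.PosDef)
    (b : Fin n → ℝ) (hb : b ≠ 0) (κ ρ ν : ℝ) (hν : ν ≠ 0)
    (hΔ : 1 - (b ⬝ᵥ A⁻¹ *ᵥ b) * κ ≠ 0) :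
    ∀ y : Fin n → ℝ,
      y ⬝ᵥ (Real.exp (2 * ρ) • (A - κ • vecMulVec b b)) *ᵥ y
          - ((ν • b) ⬝ᵥ y) ^ 2 /
            ((ν • b) ⬝ᵥ (Real.exp (2 * ρ) • (A - κ • vecMulVec b b))⁻¹ *ᵥ (ν • b))
        = Real.exp (2 * ρ) *
          (y ⬝ᵥ A *ᵥ y - (b ⬝ᵥ y) ^ 2 / (b ⬝ᵥ A⁻¹ *ᵥ b)) := by
  intro y
  have hdet : IsUnit A.det := isUnit_iff_ne_zero.mpr hA.det_pos.ne'
  have hAB : A * A⁻¹ = 1 := Matrix.mul_nonsing_inv A hdet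
  have hAt : Aᵀ = A := by have h := hA.1; simp at h; exact h
  have hBt : A⁻¹ᵀ = A⁻¹ := by rw [Matrix.transpose_nonsing_inv, hAt]
  set s := b ⬝ᵥ A⁻¹ *ᵥ b with hs
  have hspos : 0 < s := by
    have := hA.inv.re_dotProduct_pos hb
    simpa [hs] using this
  obtain ⟨c, hcdef⟩ : ∃ c : ℝ, c = κ / (1 - s * κ) := ⟨_, rfl⟩
  set u : Fin n → ℝ := A⁻¹ *ᵥ b with hu
  have hvmB : b ᵥ* A⁻¹ = u := by rw [← hBt, Matrix.vecMul_transpose]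
  have hbu : b ⬝ᵥ u = s := rfl
  have hAu : A *ᵥ u = b := by
    rw [hu, Matrix.mulVec_mulVec, hAB, Matrix.one_mulVec]
  have hexp : Real.exp (2 * ρ) ≠ 0 := (Real.exp_pos _).ne'
  set M : Matrix (Fin n) (Fin n) ℝ :=
    (Real.exp (2 * ρ))⁻¹ • (A⁻¹ + c • vecMulVec u u) with hM
  have hkey : (Real.exp (2 * ρ) • (A - κ • vecMulVec b b)) * M = 1 := by
    rw [hM, Matrix.smul_mul, Matrix.mul_smul, smul_smul,
      mul_inv_cancel₀ hexp, one_smul]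
    have expand : (A - κ • vecMulVec b b) * (A⁻¹ + c • vecMulVec u u)
        = 1 + (c * (1 - κ * s) - κ) • vecMulVec b u := by
      rw [Matrix.sub_mul, Matrix.mul_add, Matrix.mul_add, Matrix.mul_smul,
        Matrix.smul_mul, Matrix.smul_mul, Matrix.mul_smul, smul_smul,
        my_mul_vecMulVec, my_vecMulVec_mul, hvmB, hAu, hAB]
      have h4 : vecMulVec b b * vecMulVec u u = vecMulVec b ((b ᵥ* vecMulVec u u)) :=
        my_vecMulVec_mul b b (vecMulVec u u)
      have h5 : b ᵥ* vecMulVec u u = s • u := by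
        ext j
        simp only [vecMul, dotProduct, vecMulVec_apply, Pi.smul_apply, smul_eq_mul, ← hbu]
        rw [Finset.sum_mul]
        exact Finset.sum_congr rfl fun k _ => by ring
      rw [h4, h5]
      have h6 : vecMulVec b (s • u) = s • vecMulVec b u := by
        ext i j
        simp only [vecMulVec_apply, Matrix.smul_apply, Pi.smul_apply, smul_eq_mul]
        ring
      rw [h6, smul_smul]
      module
    rw [expand]
    have hcmul : c * (1 - s * κ) = κ := by rw [hcdef]; exact div_mul_cancel₀ κ hΔ
    have hc0 : c * (1 - κ * s) - κ = 0 := by linear_combination hcmul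
    rw [hc0, zero_smul, add_zero]
  have hinv : (Real.exp (2 * ρ) • (A - κ • vecMulVec b b))⁻¹ = M :=
    Matrix.inv_eq_right_inv hkey
  rw [hinv]
  have hub : u ⬝ᵥ b = s := by rw [dotProduct_comm]
  have hMb : M *ᵥ b = (Real.exp (2 * ρ))⁻¹ • (u + c • s • u) := by
    rw [hM, Matrix.smul_mulVec, Matrix.add_mulVec, Matrix.smul_mulVec,
      my_mulVec_vecMulVec, hub]
  have hden : (ν • b) ⬝ᵥ M *ᵥ (ν • b) = ν * ν * ((Real.exp (2 * ρ))⁻¹ * (s + c * (s * s))) := by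
    rw [Matrix.mulVec_smul, hMb]
    simp only [smul_dotProduct, dotProduct_smul, dotProduct_add, smul_eq_mul, hbu]
    ring
  have hnum : y ⬝ᵥ (Real.exp (2 * ρ) • (A - κ • vecMulVec b b)) *ᵥ y
      = Real.exp (2 * ρ) * (y ⬝ᵥ A *ᵥ y - κ * ((b ⬝ᵥ y) * (b ⬝ᵥ y))) := by
    rw [Matrix.smul_mulVec, Matrix.sub_mulVec, Matrix.smul_mulVec,
      my_mulVec_vecMulVec]
    simp only [dotProduct_smul, dotProduct_sub, smul_eq_mul]
    have hyb : y ⬝ᵥ b = b ⬝ᵥ y := dotProduct_comm y b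
    rw [hyb]
  have hsum : s + c * (s * s) = s / (1 - s * κ) := by
    rw [hcdef]; field_simp; ring
  rw [hden, hnum, hsum]
  simp only [smul_dotProduct, smul_eq_mul]
  field_simp
  ring
end

section
/- Let A be a symmetric positive definite real n×n matrix with n ≥ 1, b ∈ ℝⁿ, b² := bᵀA⁻¹b, and let κ, ρ be real numbers with 1 − b²κ < 0. Set Ā := e^{2ρ}(A − κ·b bᵀ). Then Ā has Lorentzian signature (n−1, 1); precisely: (i) Ā is invertible, (ii) the quadratic form y ↦ yᵀĀy is positive definite on the (n−1)-dimensional hyperplane {y ∈ ℝⁿ : bᵀy = 0}, and (iii) the vector v := A⁻¹b satisfies vᵀĀv < 0. -/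
open Matrix

lemma quad_vecMulVec {n : ℕ} (b y : Fin n → ℝ) :
    y ⬝ᵥ (vecMulVec b b) *ᵥ y = (b ⬝ᵥ y) * (b ⬝ᵥ y) := by
  simp only [mulVec, dotProduct, vecMulVec_apply, Finset.mul_sum, Finset.sum_mul]
  rw [Finset.sum_comm]
  congr 1; ext i; congr 1; ext j; ring

/-- When Δ = 1 − b²κ < 0, the β-deformed metric has Lorentzian signature (n−1,1). -/
theorem stmt4 {n : ℕ} (hn : 1 ≤ n) (A : Matrix (Fin n) (Fin n) ℝ) (hA : A.PosDef)
    (b : Fin n → ℝ) (κ ρ : ℝ)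
    (hΔ : 1 - (b ⬝ᵥ A⁻¹ *ᵥ b) * κ < 0) :
    IsUnit (Real.exp (2 * ρ) • (A - κ • vecMulVec b b)).det ∧
      (∀ y : Fin n → ℝ, b ⬝ᵥ y = 0 → y ≠ 0 →
        0 < y ⬝ᵥ (Real.exp (2 * ρ) • (A - κ • vecMulVec b b)) *ᵥ y) ∧
      (A⁻¹ *ᵥ b) ⬝ᵥ (Real.exp (2 * ρ) • (A - κ • vecMulVec b b)) *ᵥ (A⁻¹ *ᵥ b) < 0 := by
  set b2 : ℝ := b ⬝ᵥ A⁻¹ *ᵥ b with hb2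
  have hAdet : IsUnit A.det := isUnit_iff_ne_zero.mpr hA.det_pos.ne'
  have hb : b ≠ 0 := by
    intro h
    rw [h] at hb2
    simp [hb2] at hΔ
    linarith
  have hb2pos : 0 < b2 := by
    have := hA.inv.dotProduct_mulVec_pos hb
    simpa using this
  have hexp : (0:ℝ) < Real.exp (2 * ρ) := Real.exp_pos _
  have hquad : ∀ y : Fin n → ℝ,
      y ⬝ᵥ (Real.exp (2 * ρ) • (A - κ • vecMulVec b b)) *ᵥ y
        = Real.exp (2 * ρ) * (y ⬝ᵥ A *ᵥ y - κ * ((b ⬝ᵥ y) * (b ⬝ᵥ y))) := by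
    intro y
    rw [smul_mulVec, dotProduct_smul, sub_mulVec, dotProduct_sub,
      smul_mulVec, dotProduct_smul, quad_vecMulVec]
    simp only [smul_eq_mul, mul_sub]
  refine ⟨?_, ?_, ?_⟩
  · rw [det_smul]
    refine IsUnit.mul (IsUnit.pow _ (isUnit_iff_ne_zero.mpr hexp.ne')) ?_
    have hrw : A - κ • vecMulVec b b
        = A + replicateCol Unit ((-κ) • b) * replicateRow Unit b := by
      rw [vecMulVec_eq (ι := Unit) b b]
      ext i j
      simp [mul_apply, replicateCol, replicateRow, mul_comm]
      ring
    rw [hrw, det_add_replicateCol_mul_replicateRow hAdet]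
    have hdet1 : (1 + replicateRow Unit b * A⁻¹ * replicateCol Unit ((-κ) • b)).det
        = 1 - b2 * κ := by
      rw [det_unique]
      simp only [Matrix.add_apply, one_apply_eq, mul_apply, replicateRow, replicateCol, of_apply, Pi.smul_apply,
        smul_eq_mul]
      rw [hb2]
      simp only [dotProduct, mulVec, dotProduct]
      rw [sub_eq_add_neg]
      congr 1
      simp only [Finset.sum_mul, Finset.mul_sum, ← Finset.sum_neg_distrib]
      rw [Finset.sum_comm]
      refine Finset.sum_congr rfl fun i _ => Finset.sum_congr rfl fun j _ => by ring
    rw [hdet1]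
    exact IsUnit.mul hAdet (isUnit_iff_ne_zero.mpr (by linarith))
  · intro y hby hy
    rw [hquad]
    have := hA.dotProduct_mulVec_pos hy
    have hAy : 0 < y ⬝ᵥ A *ᵥ y := by simpa using this
    rw [hby]
    nlinarith
  · rw [hquad]
    have h1 : A *ᵥ (A⁻¹ *ᵥ b) = b := by
      rw [mulVec_mulVec, mul_nonsing_inv _ hAdet, one_mulVec]
    have h2 : b ⬝ᵥ (A⁻¹ *ᵥ b) = b2 := rfl
    have h3 : (A⁻¹ *ᵥ b) ⬝ᵥ A *ᵥ (A⁻¹ *ᵥ b) = b2 := by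
      rw [h1, dotProduct_comm, h2]
    rw [h3, h2]
    have : b2 - κ * (b2 * b2) = b2 * (1 - b2 * κ) := by ring
    rw [this]
    exact mul_neg_of_pos_of_neg hexp (mul_neg_of_pos_of_neg hb2pos hΔ)
end

section
/- (Composition of β-deformations.) Let A be a symmetric positive definite real n×n matrix, b ∈ ℝⁿ, b² := bᵀA⁻¹b. Let κ₁, ρ₁, ν₁ be reals with 1 − b²κ₁ ≠ 0, set Ǎ := e^{2ρ₁}(A − κ₁·b bᵀ), b̌ := ν₁·b, and b̌² := b̌ᵀǍ⁻¹b̌. Let κ₂, ρ₂, ν₂ be reals and set Ā := e^{2ρ₂}(Ǎ − κ₂·b̌ b̌ᵀ), b̄ := ν₂·b̌. Then b̄ = (ν₁ν₂)·b and there exists a real κ₃ such that Ā = e^{2(ρ₁+ρ₂)}(A − κ₃·b bᵀ) and 1 − b²κ₃ = (1 − b²κ₁)(1 − b̌²κ₂); i.e., the composition of two β-deformations is a β-deformation whose factors are (Δ̌Δ, ρ̌+ρ, ν̌ν). -/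
open Matrix

private lemma vmv_mul {n : ℕ} (u v : Fin n → ℝ) (B : Matrix (Fin n) (Fin n) ℝ) :
    vecMulVec u v * B = vecMulVec u (v ᵥ* B) := by
  ext i j
  simp [Matrix.mul_apply, vecMulVec_apply, Matrix.vecMul, dotProduct,
    Finset.mul_sum, mul_assoc]

private lemma vmv_mulVec {n : ℕ} (u v x : Fin n → ℝ) :
    vecMulVec u v *ᵥ x = (v ⬝ᵥ x) • u := by
  ext i
  simp [Matrix.mulVec, vecMulVec_apply, dotProduct, Finset.sum_mul]
  apply Finset.sum_congr rfl
  intro k _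
  ring

private lemma vmv_mul_vmv {n : ℕ} (u v w x : Fin n → ℝ) :
    vecMulVec u v * vecMulVec w x = (v ⬝ᵥ w) • vecMulVec u x := by
  ext i j
  simp [Matrix.mul_apply, vecMulVec_apply, dotProduct, Finset.sum_mul,
    Finset.mul_sum]
  apply Finset.sum_congr rfl
  intro k _
  ring

private lemma vmv_smul_smul {n : ℕ} (r : ℝ) (u : Fin n → ℝ) :
    vecMulVec (r • u) (r • u) = (r * r) • vecMulVec u u := by
  ext i j
  simp [vecMulVec_apply]
  ring

/-- The composition of two β-deformations is a β-deformation with factors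
    (Δ̌Δ, ρ̌+ρ, ν̌ν). -/
theorem stmt5 {n : ℕ} (A : Matrix (Fin n) (Fin n) ℝ) (hA : A.PosDef)
    (b : Fin n → ℝ) (κ₁ ρ₁ ν₁ κ₂ ρ₂ ν₂ : ℝ)
    (h₁ : 1 - (b ⬝ᵥ A⁻¹ *ᵥ b) * κ₁ ≠ 0) :
    ν₂ • (ν₁ • b) = (ν₁ * ν₂) • b ∧
    ∃ κ₃ : ℝ,
      Real.exp (2 * ρ₂) •
          (Real.exp (2 * ρ₁) • (A - κ₁ • vecMulVec b b) -
            κ₂ • vecMulVec (ν₁ • b) (ν₁ • b))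
        = Real.exp (2 * (ρ₁ + ρ₂)) • (A - κ₃ • vecMulVec b b) ∧
      1 - (b ⬝ᵥ A⁻¹ *ᵥ b) * κ₃
        = (1 - (b ⬝ᵥ A⁻¹ *ᵥ b) * κ₁) *
          (1 - ((ν₁ • b) ⬝ᵥ
              (Real.exp (2 * ρ₁) • (A - κ₁ • vecMulVec b b))⁻¹ *ᵥ (ν₁ • b)) * κ₂) := by
  have hvb : ν₂ • (ν₁ • b) = (ν₁ * ν₂) • b := by
    rw [smul_smul]; ring_nf
  refine ⟨hvb, ?_⟩
  set s : ℝ := b ⬝ᵥ A⁻¹ *ᵥ b with hs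
  set r : ℝ := Real.exp (2 * ρ₁) with hr
  have hr0 : r ≠ 0 := Real.exp_ne_zero _
  set Δ : ℝ := 1 - s * κ₁ with hΔ
  set κ₃ : ℝ := κ₁ + κ₂ * ν₁ ^ 2 * r⁻¹ with hκ₃
  refine ⟨κ₃, ?_, ?_⟩
  · -- matrix identity
    have hE : Real.exp (2 * (ρ₁ + ρ₂)) = Real.exp (2 * ρ₂) * r := by
      rw [hr, ← Real.exp_add]; ring_nf
    rw [hE, vmv_smul_smul]
    ext i j
    simp only [Matrix.smul_apply, Matrix.sub_apply, smul_eq_mul]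
    field_simp [hκ₃]
    rw [hκ₃]; field_simp; ring
  · -- scalar identity
    -- Sherman–Morrison inverse
    have hAinv : A * A⁻¹ = 1 := Matrix.mul_nonsing_inv A (isUnit_iff_ne_zero.mpr hA.det_pos.ne')
    set M : Matrix (Fin n) (Fin n) ℝ :=
      A⁻¹ + (κ₁ / Δ) • (A⁻¹ * vecMulVec b b * A⁻¹) with hM
    have hc : vecMulVec b b * A⁻¹ = vecMulVec b (b ᵥ* A⁻¹) := vmv_mul b b A⁻¹
    have hcb : (b ᵥ* A⁻¹) ⬝ᵥ b = s := (Matrix.dotProduct_mulVec b A⁻¹ b).symm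
    have key : (A - κ₁ • vecMulVec b b) * M = 1 := by
      have h2 : A * (A⁻¹ * vecMulVec b b * A⁻¹) = vecMulVec b b * A⁻¹ := by
        rw [← Matrix.mul_assoc, ← Matrix.mul_assoc, hAinv, Matrix.one_mul]
      have h3 : vecMulVec b b * (A⁻¹ * vecMulVec b b * A⁻¹)
          = s • (vecMulVec b b * A⁻¹) := by
        calc vecMulVec b b * (A⁻¹ * vecMulVec b b * A⁻¹)
            = (vecMulVec b b * A⁻¹) * (vecMulVec b b * A⁻¹) := by
              rw [Matrix.mul_assoc, Matrix.mul_assoc]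
          _ = vecMulVec b (b ᵥ* A⁻¹) * vecMulVec b (b ᵥ* A⁻¹) := by rw [hc]
          _ = ((b ᵥ* A⁻¹) ⬝ᵥ b) • vecMulVec b (b ᵥ* A⁻¹) := vmv_mul_vmv _ _ _ _
          _ = s • (vecMulVec b b * A⁻¹) := by rw [hcb, hc]
      rw [hM]
      simp only [Matrix.sub_mul, Matrix.mul_add, smul_mul_assoc, mul_smul_comm,
        hAinv, h2, h3, smul_smul]
      match_scalars <;> field_simp <;> ring
    have keyr : (r • (A - κ₁ • vecMulVec b b)) * (r⁻¹ • M) = 1 := by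
      rw [Matrix.smul_mul, Matrix.mul_smul, key, smul_smul, mul_inv_cancel₀ hr0,
        one_smul]
    have hinv : (r • (A - κ₁ • vecMulVec b b))⁻¹ = r⁻¹ • M :=
      Matrix.inv_eq_right_inv keyr
    rw [hinv]
    -- compute the quadratic form
    have h4 : (A⁻¹ * vecMulVec b b * A⁻¹) *ᵥ b = s • (A⁻¹ *ᵥ b) := by
      rw [Matrix.mul_assoc, ← Matrix.mulVec_mulVec, ← Matrix.mulVec_mulVec,
        vmv_mulVec, Matrix.mulVec_smul, hs]
    have hbMb : b ⬝ᵥ M *ᵥ b = s / Δ := by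
      rw [hM, Matrix.add_mulVec, Matrix.smul_mulVec, h4, dotProduct_add,
        dotProduct_smul, dotProduct_smul, ← hs]
      simp only [smul_eq_mul]
      field_simp
      ring
    have hq : (ν₁ • b) ⬝ᵥ (r⁻¹ • M) *ᵥ (ν₁ • b) = ν₁ * ν₁ * r⁻¹ * (s / Δ) := by
      rw [Matrix.smul_mulVec, Matrix.mulVec_smul, smul_dotProduct,
        dotProduct_smul, dotProduct_smul, hbMb]
      simp only [smul_eq_mul]
      ring
    have hΔ0 : (1 : ℝ) - s * κ₁ ≠ 0 := hΔ ▸ h₁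
    rw [hq, hκ₃, hΔ]
    field_simp
    ring
end

section
/- Fix an integer n, real constants a ≠ 0, μ, μ̄, and a nonempty open interval I ⊆ (0, ∞). Let Δ, ρ : ℝ → ℝ be three times continuously differentiable on I with Δ > 0 and a² − μt ≠ 0 for all t ∈ I. Then for every t ∈ I the identity tΔ(t)·[2ρ'(t)X(t) − X'(t) + (a² − μt)P(t)Z(t)] − T'(t) = 0 holds. -/
noncomputable section

/-- P(t) := 1 + 2tρ'(t). -/
def Pfun (ρ : ℝ → ℝ) : ℝ → ℝ := fun t => 1 + 2 * t * deriv ρ t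

/-- The coefficient X of α² in the Einstein condition. -/
def Xfun (n : ℤ) (a μ μb : ℝ) (Δ ρ : ℝ → ℝ) : ℝ → ℝ := fun t =>
  (1 / (t * Δ t)) *
    (a ^ 2 * Δ t * ((n : ℝ) - 2 * Δ t)
      + t * (μ * Δ t - (a ^ 2 - μ * t) * deriv Δ t) * Pfun ρ t
      - ((n : ℝ) - 2) * (a ^ 2 - μ * t) * Δ t * Pfun ρ t ^ 2
      - 2 * (a ^ 2 - μ * t) * t * Δ t * deriv (Pfun ρ) t
      - ((n : ℝ) - 1) * μb * t * Δ t * Real.exp (2 * ρ t))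

/-- The coefficient Y of β² in the Einstein condition. -/
def Yfun (n : ℤ) (a μ μb : ℝ) (Δ ρ : ℝ → ℝ) : ℝ → ℝ := fun t =>
  -(1 / (t ^ 2 * Δ t)) *
    (a ^ 2 * Δ t * (1 - Δ t) * ((n : ℝ) + ((n : ℝ) - 2) * Δ t)
      + (2 * a ^ 2 - 3 * μ * t) * t * Δ t * deriv Δ t
      - (a ^ 2 - μ * t) * t ^ 2 * deriv Δ t ^ 2
      + 2 * (a ^ 2 - μ * t) * t ^ 2 * Δ t * deriv (deriv Δ) t
      + μ * t * Δ t * (1 - Δ t) * Pfun ρ t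
      - (a ^ 2 - μ * t) * t * (1 - ((n : ℝ) - 1) * Δ t) * deriv Δ t * Pfun ρ t
      - ((n : ℝ) - 2) * (a ^ 2 - μ * t) * Δ t * (1 - Δ t) * Pfun ρ t ^ 2
      - 2 * (a ^ 2 - μ * t) * t * Δ t * (1 - Δ t) * deriv (Pfun ρ) t
      - ((n : ℝ) - 1) * μb * t * Δ t * (1 - Δ t) * Real.exp (2 * ρ t))

/-- The coefficient Z of s₀² in the Einstein condition. -/
def Zfun (n : ℤ) (a μ : ℝ) (Δ ρ : ℝ → ℝ) : ℝ → ℝ := fun t =>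
  -(1 / ((a ^ 2 - μ * t) * t ^ 2 * Δ t ^ 2)) *
    (a ^ 2 * Δ t ^ 2 * ((n : ℝ) - 2 * Δ t)
      + (2 * a ^ 2 - 3 * μ * t) * t * Δ t * deriv Δ t
      - (a ^ 2 - μ * t) * t ^ 2 * deriv Δ t ^ 2
      + 2 * (a ^ 2 - μ * t) * t ^ 2 * Δ t * deriv (deriv Δ) t
      - ((n : ℝ) - 2) * μ * t * Δ t ^ 2 * Pfun ρ t
      - ((n : ℝ) - 2) * (a ^ 2 - μ * t) * Δ t ^ 2 * Pfun ρ t ^ 2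
      + 2 * ((n : ℝ) - 2) * (a ^ 2 - μ * t) * t * Δ t ^ 2 * deriv (Pfun ρ) t)

/-- The combination T from Lemma 5.2. -/
def Tfun (a μ : ℝ) (Δ ρ : ℝ → ℝ) : ℝ → ℝ := fun t =>
  (a ^ 2 - μ * t) *
      (Δ t ^ 2 - t * deriv Δ t * Pfun ρ t - Δ t * Pfun ρ t ^ 2
        + 2 * t * Δ t * deriv (Pfun ρ) t)
    + μ * t * (Δ t ^ 2 - Δ t * Pfun ρ t)

end

/-- The identity tΔ·(2ρ'X − X' + (a²−μt)PZ) − T' = 0. -/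
theorem stmt11 (n : ℤ) (a μ μb : ℝ) (ha : a ≠ 0)
    (I : Set ℝ) (hIopen : IsOpen I) (hIsub : I ⊆ Set.Ioi (0 : ℝ))
    (hIne : I.Nonempty) (Δ ρ : ℝ → ℝ)
    (hΔ : ContDiffOn ℝ 3 Δ I) (hρ : ContDiffOn ℝ 3 ρ I)
    (hΔpos : ∀ t ∈ I, 0 < Δ t) (hμ : ∀ t ∈ I, a ^ 2 - μ * t ≠ 0) :
    ∀ t ∈ I,
      t * Δ t *
          (2 * deriv ρ t * Xfun n a μ μb Δ ρ t - deriv (Xfun n a μ μb Δ ρ) t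
            + (a ^ 2 - μ * t) * Pfun ρ t * Zfun n a μ Δ ρ t)
        - deriv (Tfun a μ Δ ρ) t = 0 := by
  intro t ht
  have ht0 : t ≠ 0 := ne_of_gt (hIsub ht)
  have hD0 : Δ t ≠ 0 := (hΔpos t ht).ne'
  have hA0 : a ^ 2 - μ * t ≠ 0 := hμ t ht
  -- basic differentiability facts
  have key : ∀ (f : ℝ → ℝ), ContDiffOn ℝ 1 f I → ∀ s ∈ I, HasDerivAt f (deriv f s) s :=
    fun f hf s hs =>
      ((hf.differentiableOn one_ne_zero).differentiableAt (hIopen.mem_nhds hs)).hasDerivAt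
  have cΔ1 : ContDiffOn ℝ 2 (deriv Δ) I := hΔ.deriv_of_isOpen hIopen (by norm_num)
  have cρ1 : ContDiffOn ℝ 2 (deriv ρ) I := hρ.deriv_of_isOpen hIopen (by norm_num)
  have cρ2 : ContDiffOn ℝ 1 (deriv (deriv ρ)) I := cρ1.deriv_of_isOpen hIopen (by norm_num)
  have HΔ : ∀ s ∈ I, HasDerivAt Δ (deriv Δ s) s := key Δ (hΔ.of_le (by norm_num))
  have HΔ' : ∀ s ∈ I, HasDerivAt (deriv Δ) (deriv (deriv Δ) s) s :=
    key (deriv Δ) (cΔ1.of_le (by norm_num))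
  have Hρ : ∀ s ∈ I, HasDerivAt ρ (deriv ρ s) s := key ρ (hρ.of_le (by norm_num))
  have Hρ' : ∀ s ∈ I, HasDerivAt (deriv ρ) (deriv (deriv ρ) s) s :=
    key (deriv ρ) (cρ1.of_le (by norm_num))
  have Hρ'' : ∀ s ∈ I, HasDerivAt (deriv (deriv ρ)) (deriv (deriv (deriv ρ)) s) s :=
    key (deriv (deriv ρ)) cρ2
  -- derivative of P
  have hPs : ∀ s ∈ I,
      HasDerivAt (Pfun ρ) (2 * deriv ρ s + 2 * s * deriv (deriv ρ) s) s := fun s hs =>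
    ((((hasDerivAt_id' s).const_mul (2:ℝ)).mul (Hρ' s hs)).const_add 1).congr_deriv (by ring)
  have hPt := hPs t ht
  have hPdEq : ∀ s ∈ I, deriv (Pfun ρ) s = 2 * deriv ρ s + 2 * s * deriv (deriv ρ) s :=
    fun s hs => (hPs s hs).deriv
  -- derivative of deriv P
  have hP' : HasDerivAt (deriv (Pfun ρ))
      (4 * deriv (deriv ρ) t + 2 * t * deriv (deriv (deriv ρ)) t) t := by
    have h1 : HasDerivAt (fun s => 2 * deriv ρ s + 2 * s * deriv (deriv ρ) s)
        (4 * deriv (deriv ρ) t + 2 * t * deriv (deriv (deriv ρ)) t) t :=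
      (((Hρ' t ht).const_mul 2).add
        (((hasDerivAt_id' t).const_mul (2:ℝ)).mul (Hρ'' t ht))).congr_deriv (by ring)
    refine h1.congr_of_eventuallyEq ?_
    filter_upwards [hIopen.mem_nhds ht] with s hs
    exact hPdEq s hs
  -- building blocks
  have hid : HasDerivAt (fun x : ℝ => x) 1 t := hasDerivAt_id' t
  have hΔt := HΔ t ht
  have hΔ't := HΔ' t ht
  have hlin : HasDerivAt (fun s : ℝ => a ^ 2 - μ * s) (-(μ * 1)) t :=
    (hid.const_mul μ).const_sub (a ^ 2)
  have hexp : HasDerivAt (fun s => Real.exp (2 * ρ s)) (Real.exp (2 * ρ t) * (2 * deriv ρ t)) t :=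
    ((Hρ t ht).const_mul 2).exp
  -- derivative of Xfun
  have hXA := (hΔt.const_mul (a ^ 2)).mul ((hΔt.const_mul 2).const_sub ((n:ℝ)))
  have hXB := (hid.mul ((hΔt.const_mul μ).sub (hlin.mul hΔ't))).mul hPt
  have hXC := ((hlin.const_mul ((n:ℝ) - 2)).mul hΔt).mul (hPt.pow 2)
  have hXE1 := (((hlin.const_mul 2).mul hid).mul hΔt).mul hP'
  have hXE2 := ((hid.const_mul (((n:ℝ) - 1) * μb)).mul hΔt).mul hexp
  have hXN := (((hXA.add hXB).sub hXC).sub hXE1).sub hXE2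
  have hXchain :=
    ((hasDerivAt_const t (1:ℝ)).div (hid.mul hΔt) (mul_ne_zero ht0 hD0)).mul hXN
  -- derivative of Tfun
  have hTI := (((hΔt.pow 2).sub ((hid.mul hΔ't).mul hPt)).sub
      (hΔt.mul (hPt.pow 2))).add (((hid.const_mul 2).mul hΔt).mul hP')
  have hTchain := (hlin.mul hTI).add
    ((hid.const_mul μ).mul ((hΔt.pow 2).sub (hΔt.mul hPt)))
  rw [show deriv (Xfun n a μ μb Δ ρ) t = _ from hXchain.deriv,
    show deriv (Tfun a μ Δ ρ) t = _ from hTchain.deriv]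
  simp only [Xfun, Zfun]
  simp only [Pi.mul_apply, Pi.div_apply, Pi.sub_apply, Pi.add_apply, Pi.pow_apply, Nat.cast_ofNat, show (2:ℕ) - 1 = 1 from rfl, pow_one]
  rw [hPt.deriv]
  simp only [Pfun]
  have hA2 : a ^ 2 - t * μ ≠ 0 := by rw [mul_comm]; exact hA0
  field_simp
  ring
end

section
/- Fix an integer n > 2, real constants a ≠ 0, μ, μ̄, and a nonempty open interval I ⊆ (0, ∞). Let Δ, ρ : ℝ → ℝ be three times continuously differentiable on I with Δ > 0, a² − μt ≠ 0, and P(t) := 1 + 2tρ'(t) ≠ 0 for all t ∈ I. Then X, Y and Z all vanish identically on I if and only if X and T both vanish identically on I. -/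
noncomputable section Aux

/-- The bracket (numerator) of `Xfun`. -/
def BX (n : ℤ) (a μ μb : ℝ) (Δ ρ : ℝ → ℝ) (t : ℝ) : ℝ :=
  a ^ 2 * Δ t * ((n : ℝ) - 2 * Δ t)
    + t * (μ * Δ t - (a ^ 2 - μ * t) * deriv Δ t) * Pfun ρ t
    - ((n : ℝ) - 2) * (a ^ 2 - μ * t) * Δ t * Pfun ρ t ^ 2
    - 2 * (a ^ 2 - μ * t) * t * Δ t * deriv (Pfun ρ) t
    - ((n : ℝ) - 1) * μb * t * Δ t * Real.exp (2 * ρ t)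

/-- The bracket (numerator) of `Yfun`. -/
def BY (n : ℤ) (a μ μb : ℝ) (Δ ρ : ℝ → ℝ) (t : ℝ) : ℝ :=
  a ^ 2 * Δ t * (1 - Δ t) * ((n : ℝ) + ((n : ℝ) - 2) * Δ t)
    + (2 * a ^ 2 - 3 * μ * t) * t * Δ t * deriv Δ t
    - (a ^ 2 - μ * t) * t ^ 2 * deriv Δ t ^ 2
    + 2 * (a ^ 2 - μ * t) * t ^ 2 * Δ t * deriv (deriv Δ) t
    + μ * t * Δ t * (1 - Δ t) * Pfun ρ t
    - (a ^ 2 - μ * t) * t * (1 - ((n : ℝ) - 1) * Δ t) * deriv Δ t * Pfun ρ t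
    - ((n : ℝ) - 2) * (a ^ 2 - μ * t) * Δ t * (1 - Δ t) * Pfun ρ t ^ 2
    - 2 * (a ^ 2 - μ * t) * t * Δ t * (1 - Δ t) * deriv (Pfun ρ) t
    - ((n : ℝ) - 1) * μb * t * Δ t * (1 - Δ t) * Real.exp (2 * ρ t)

/-- The bracket (numerator) of `Zfun`. -/
def BZ (n : ℤ) (a μ : ℝ) (Δ ρ : ℝ → ℝ) (t : ℝ) : ℝ :=
  a ^ 2 * Δ t ^ 2 * ((n : ℝ) - 2 * Δ t)
    + (2 * a ^ 2 - 3 * μ * t) * t * Δ t * deriv Δ t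
    - (a ^ 2 - μ * t) * t ^ 2 * deriv Δ t ^ 2
    + 2 * (a ^ 2 - μ * t) * t ^ 2 * Δ t * deriv (deriv Δ) t
    - ((n : ℝ) - 2) * μ * t * Δ t ^ 2 * Pfun ρ t
    - ((n : ℝ) - 2) * (a ^ 2 - μ * t) * Δ t ^ 2 * Pfun ρ t ^ 2
    + 2 * ((n : ℝ) - 2) * (a ^ 2 - μ * t) * t * Δ t ^ 2 * deriv (Pfun ρ) t

/-- The auxiliary function W = (X-bracket) + T, with the P'-terms cancelled. -/
def Wfun (n : ℤ) (a μ μb : ℝ) (Δ ρ : ℝ → ℝ) : ℝ → ℝ := fun u =>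
  a ^ 2 * Δ u * ((n : ℝ) - 2 * Δ u)
    + u * (μ * Δ u - (a ^ 2 - μ * u) * deriv Δ u) * Pfun ρ u
    - ((n : ℝ) - 2) * (a ^ 2 - μ * u) * Δ u * Pfun ρ u ^ 2
    - ((n : ℝ) - 1) * μb * u * Δ u * Real.exp (2 * ρ u)
    + (a ^ 2 - μ * u) * (Δ u ^ 2 - u * deriv Δ u * Pfun ρ u - Δ u * Pfun ρ u ^ 2)
    + μ * u * (Δ u ^ 2 - Δ u * Pfun ρ u)

/-- The derivative of `Wfun`. -/
def WD (n : ℤ) (a μ μb : ℝ) (Δ ρ : ℝ → ℝ) (t : ℝ) : ℝ :=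
  (a ^ 2 * deriv Δ t * ((n : ℝ) - 2 * Δ t) - 2 * a ^ 2 * Δ t * deriv Δ t)
    + ((μ * Δ t - (a ^ 2 - μ * t) * deriv Δ t) * Pfun ρ t
        + t * (2 * μ * deriv Δ t - (a ^ 2 - μ * t) * deriv (deriv Δ) t) * Pfun ρ t
        + t * (μ * Δ t - (a ^ 2 - μ * t) * deriv Δ t) * deriv (Pfun ρ) t)
    - ((n : ℝ) - 2) * (-(μ * Δ t * Pfun ρ t ^ 2)
        + (a ^ 2 - μ * t) * deriv Δ t * Pfun ρ t ^ 2
        + 2 * (a ^ 2 - μ * t) * Δ t * Pfun ρ t * deriv (Pfun ρ) t)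
    - ((n : ℝ) - 1) * μb * (Δ t * Real.exp (2 * ρ t)
        + t * deriv Δ t * Real.exp (2 * ρ t)
        + t * Δ t * (Real.exp (2 * ρ t) * (2 * deriv ρ t)))
    + (-(μ * (Δ t ^ 2 - t * deriv Δ t * Pfun ρ t - Δ t * Pfun ρ t ^ 2))
        + (a ^ 2 - μ * t) * (2 * Δ t * deriv Δ t - deriv Δ t * Pfun ρ t
            - t * deriv (deriv Δ) t * Pfun ρ t - t * deriv Δ t * deriv (Pfun ρ) t
            - deriv Δ t * Pfun ρ t ^ 2 - 2 * Δ t * Pfun ρ t * deriv (Pfun ρ) t))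
    + (μ * (Δ t ^ 2 - Δ t * Pfun ρ t)
        + μ * t * (2 * Δ t * deriv Δ t - deriv Δ t * Pfun ρ t - Δ t * deriv (Pfun ρ) t))

lemma one_div_mul_eq_zero {c B : ℝ} (hc : c ≠ 0) (h : 1 / c * B = 0) : B = 0 := by
  rcases mul_eq_zero.mp h with h' | h'
  · exact absurd h' (one_div_ne_zero hc)
  · exact h'

lemma BX_eq_zero {n : ℤ} {a μ μb : ℝ} {Δ ρ : ℝ → ℝ} {t : ℝ} (ht : t ≠ 0) (hΔt : Δ t ≠ 0)
    (h : Xfun n a μ μb Δ ρ t = 0) : BX n a μ μb Δ ρ t = 0 := by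
  have h' : 1 / (t * Δ t) * BX n a μ μb Δ ρ t = 0 := h
  exact one_div_mul_eq_zero (mul_ne_zero ht hΔt) h'

lemma BY_eq_zero {n : ℤ} {a μ μb : ℝ} {Δ ρ : ℝ → ℝ} {t : ℝ} (ht : t ≠ 0) (hΔt : Δ t ≠ 0)
    (h : Yfun n a μ μb Δ ρ t = 0) : BY n a μ μb Δ ρ t = 0 := by
  have h' : -(1 / (t ^ 2 * Δ t)) * BY n a μ μb Δ ρ t = 0 := h
  rw [neg_mul] at h'
  exact one_div_mul_eq_zero (mul_ne_zero (pow_ne_zero 2 ht) hΔt) (neg_eq_zero.mp h')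

lemma BZ_eq_zero {n : ℤ} {a μ : ℝ} {Δ ρ : ℝ → ℝ} {t : ℝ} (ht : t ≠ 0) (hΔt : Δ t ≠ 0)
    (hA : a ^ 2 - μ * t ≠ 0) (h : Zfun n a μ Δ ρ t = 0) : BZ n a μ Δ ρ t = 0 := by
  have h' : -(1 / ((a ^ 2 - μ * t) * t ^ 2 * Δ t ^ 2)) * BZ n a μ Δ ρ t = 0 := h
  rw [neg_mul] at h'
  exact one_div_mul_eq_zero
    (mul_ne_zero (mul_ne_zero hA (pow_ne_zero 2 ht)) (pow_ne_zero 2 hΔt)) (neg_eq_zero.mp h')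

/-- Identity A : BY = (1-Δ)·BX + BZ - (n-2)·Δ·T. -/
lemma identityA (n : ℤ) (a μ μb : ℝ) (Δ ρ : ℝ → ℝ) (t : ℝ) :
    BY n a μ μb Δ ρ t =
      (1 - Δ t) * BX n a μ μb Δ ρ t + BZ n a μ Δ ρ t
        - ((n : ℝ) - 2) * Δ t * Tfun a μ Δ ρ t := by
  simp only [BX, BY, BZ, Tfun]; ring

end Aux

/-- For n > 2 with P ≠ 0, the system X = Y = Z = 0 is equivalent to X = T = 0. -/
theorem stmt12 (n : ℤ) (hn : 2 < n) (a μ μb : ℝ) (ha : a ≠ 0)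
    (I : Set ℝ) (hIopen : IsOpen I) (hIsub : I ⊆ Set.Ioi (0 : ℝ))
    (hIne : I.Nonempty) (Δ ρ : ℝ → ℝ)
    (hΔ : ContDiffOn ℝ 3 Δ I) (hρ : ContDiffOn ℝ 3 ρ I)
    (hΔpos : ∀ t ∈ I, 0 < Δ t) (hμ : ∀ t ∈ I, a ^ 2 - μ * t ≠ 0)
    (hP : ∀ t ∈ I, Pfun ρ t ≠ 0) :
    (∀ t ∈ I, Xfun n a μ μb Δ ρ t = 0 ∧ Yfun n a μ μb Δ ρ t = 0 ∧
        Zfun n a μ Δ ρ t = 0) ↔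
      (∀ t ∈ I, Xfun n a μ μb Δ ρ t = 0 ∧ Tfun a μ Δ ρ t = 0) := by
  have hn2 : ((n : ℝ) - 2) ≠ 0 := by
    have : (2 : ℝ) < (n : ℝ) := by exact_mod_cast hn
    linarith
  constructor
  · -- X = Y = Z = 0  ⇒  X = T = 0
    rintro h t ht
    obtain ⟨hX, hY, hZ⟩ := h t ht
    refine ⟨hX, ?_⟩
    have ht0 : (0 : ℝ) < t := hIsub ht
    have hΔt := (hΔpos t ht).ne'
    have hbx := BX_eq_zero ht0.ne' hΔt hX
    have hby := BY_eq_zero ht0.ne' hΔt hY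
    have hbz := BZ_eq_zero ht0.ne' hΔt (hμ t ht) hZ
    have hid := identityA n a μ μb Δ ρ t
    rw [hbx, hby, hbz] at hid
    have h5 : ((n : ℝ) - 2) * Δ t * Tfun a μ Δ ρ t = 0 := by linarith
    rcases mul_eq_zero.mp h5 with h' | h'
    · exact absurd h' (mul_ne_zero hn2 hΔt)
    · exact h'
  · -- X = T = 0  ⇒  X = Y = Z = 0
    rintro h t ht
    have ht0 : (0 : ℝ) < t := hIsub ht
    have hΔt := (hΔpos t ht).ne'
    have hAt := hμ t ht
    have hPt := hP t ht
    have hmem : I ∈ nhds t := hIopen.mem_nhds ht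
    -- differentiability facts
    have hΔd : DifferentiableOn ℝ Δ I := hΔ.differentiableOn (by norm_num)
    have hD : HasDerivAt Δ (deriv Δ t) t := (hΔd.differentiableAt hmem).hasDerivAt
    have hΔ' : ContDiffOn ℝ 2 (deriv Δ) I := hΔ.deriv_of_isOpen hIopen (by norm_num)
    have hD1 : HasDerivAt (deriv Δ) (deriv (deriv Δ) t) t :=
      ((hΔ'.differentiableOn (by norm_num)).differentiableAt hmem).hasDerivAt
    have hr : HasDerivAt ρ (deriv ρ t) t :=
      ((hρ.differentiableOn (by norm_num)).differentiableAt hmem).hasDerivAt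
    have hρ' : ContDiffOn ℝ 2 (deriv ρ) I := hρ.deriv_of_isOpen hIopen (by norm_num)
    have hρ1 : DifferentiableAt ℝ (deriv ρ) t :=
      (hρ'.differentiableOn (by norm_num)).differentiableAt hmem
    have hQdiff : DifferentiableAt ℝ (Pfun ρ) t := by
      unfold Pfun
      exact (differentiableAt_const _).add ((differentiableAt_fun_id.const_mul 2).mul hρ1)
    have hQ : HasDerivAt (Pfun ρ) (deriv (Pfun ρ) t) t := hQdiff.hasDerivAt
    have hE : HasDerivAt (fun u => Real.exp (2 * ρ u))
        (Real.exp (2 * ρ t) * (2 * deriv ρ t)) t := (hr.const_mul 2).exp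
    have hid : HasDerivAt (fun u : ℝ => u) 1 t := hasDerivAt_id t
    have hA' : HasDerivAt (fun u : ℝ => a ^ 2 - μ * u) (-μ) t := by
      simpa using (hid.const_mul μ).const_sub (a ^ 2)
    -- W vanishes on I
    have hWzero : ∀ u ∈ I, Wfun n a μ μb Δ ρ u = 0 := by
      intro u hu
      have h1 := BX_eq_zero (hIsub hu).ne' (hΔpos u hu).ne' (h u hu).1
      have h2 := (h u hu).2
      simp only [BX] at h1
      simp only [Tfun] at h2
      simp only [Wfun]
      linear_combination h1 + h2
    -- hence deriv W t = 0
    have hev : Wfun n a μ μb Δ ρ =ᶠ[nhds t] fun _ => (0 : ℝ) :=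
      Filter.eventuallyEq_of_mem hmem hWzero
    have hderiv0 : deriv (Wfun n a μ μb Δ ρ) t = 0 := by
      rw [hev.deriv_eq]; exact deriv_const t 0
    -- compute deriv W t
    have hW : HasDerivAt (Wfun n a μ μb Δ ρ) (WD n a μ μb Δ ρ t) t := by
      unfold Wfun
      have big := ((((((hD.const_mul (a ^ 2)).mul ((hD.const_mul 2).const_sub (n : ℝ))).add
          ((hid.mul ((hD.const_mul μ).sub (hA'.mul hD1))).mul hQ)).sub
          (((hA'.const_mul ((n : ℝ) - 2)).mul hD).mul (hQ.pow 2))).sub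
          (((hid.const_mul (((n : ℝ) - 1) * μb)).mul hD).mul hE)).add
          (hA'.mul (((hD.pow 2).sub ((hid.mul hD1).mul hQ)).sub (hD.mul (hQ.pow 2))))).add
          ((hid.const_mul μ).mul ((hD.pow 2).sub (hD.mul hQ)))
      exact big.congr_deriv (by simp only [WD, Pi.mul_apply, Pi.pow_apply, Pi.sub_apply, Pi.add_apply, Pi.neg_apply]; push_cast; ring)
    have hw : WD n a μ μb Δ ρ t = 0 := by
      rw [← hW.deriv]; exact hderiv0
    -- the master identity gives BZ = 0
    have hbx := BX_eq_zero ht0.ne' hΔt (h t ht).1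
    have hq : Pfun ρ t = 1 + 2 * t * deriv ρ t := rfl
    have hkey : t * Pfun ρ t * BZ n a μ Δ ρ t =
        (t * Δ t * Pfun ρ t + t ^ 2 * deriv Δ t) * BX n a μ μb Δ ρ t
          - t ^ 2 * Δ t * WD n a μ μb Δ ρ t := by
      simp only [BX, BZ, WD]
      rw [hq]; ring
    have h0 : t * Pfun ρ t * BZ n a μ Δ ρ t = 0 := by
      rw [hkey, hbx, hw]; ring
    have hbz : BZ n a μ Δ ρ t = 0 := by
      rcases mul_eq_zero.mp h0 with h' | h'
      · exact absurd h' (mul_ne_zero ht0.ne' hPt)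
      · exact h'
    -- conclude
    have hby : BY n a μ μb Δ ρ t = 0 := by
      rw [identityA n a μ μb Δ ρ t, hbx, hbz, (h t ht).2]; ring
    refine ⟨(h t ht).1, ?_, ?_⟩
    · show -(1 / (t ^ 2 * Δ t)) * BY n a μ μb Δ ρ t = 0
      rw [hby, mul_zero]
    · show -(1 / ((a ^ 2 - μ * t) * t ^ 2 * Δ t ^ 2)) * BZ n a μ Δ ρ t = 0
      rw [hbz, mul_zero]
end

section
/- Fix an integer n > 2, real constants a ≠ 0, μ, μ̄, and a nonempty open interval I ⊆ (0, ∞) with a² − μt > 0 for all t ∈ I. Let Δ : ℝ → ℝ be three times continuously differentiable on I with Δ > 0 on I, and suppose ρ is constant on I. Then X, Y and Z all vanish identically on I if and only if either (i) Δ ≡ 1 on I and μ̄ = e^{−2ρ}μ, or (ii) Δ(t) = 1 − μt/a² for all t ∈ I and μ̄ = ((n+2)/(n−1))·e^{−2ρ}μ. -/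
set_option maxHeartbeats 1000000


/-- Pure stretch case ρ ≡ const: solutions of X = Y = Z = 0 (Lemma 5.5). -/
theorem stmt14 (n : ℤ) (hn : 2 < n) (a μ μb : ℝ) (ha : a ≠ 0)
    (I : Set ℝ) (hIopen : IsOpen I) (hIsub : I ⊆ Set.Ioi (0 : ℝ))
    (hIne : I.Nonempty) (Δ ρ : ℝ → ℝ) (r : ℝ)
    (hΔ : ContDiffOn ℝ 3 Δ I) (hΔpos : ∀ t ∈ I, 0 < Δ t)
    (hρconst : ∀ t ∈ I, ρ t = r)
    (hμ : ∀ t ∈ I, 0 < a ^ 2 - μ * t) :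
    (∀ t ∈ I, Xfun n a μ μb Δ ρ t = 0 ∧ Yfun n a μ μb Δ ρ t = 0 ∧
        Zfun n a μ Δ ρ t = 0) ↔
      (((∀ t ∈ I, Δ t = 1) ∧ μb = Real.exp (-(2 * r)) * μ) ∨
       ((∀ t ∈ I, Δ t = 1 - μ * t / a ^ 2) ∧
        μb = (((n : ℝ) + 2) / ((n : ℝ) - 1)) * Real.exp (-(2 * r)) * μ)) := by
  have hn' : (2 : ℝ) < (n : ℝ) := by exact_mod_cast hn
  have ha2 : a ^ 2 ≠ 0 := pow_ne_zero 2 ha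
  have hE : Real.exp (2 * r) ≠ 0 := Real.exp_ne_zero _
  have hP : ∀ t ∈ I, Pfun ρ t = 1 := by
    intro t ht
    have hd : deriv ρ t = 0 := by
      have hev : ρ =ᶠ[nhds t] fun _ => r := by
        filter_upwards [hIopen.mem_nhds ht] with s hs using hρconst s hs
      rw [hev.deriv_eq]; simp
    simp [Pfun, hd]
  have hP' : ∀ t ∈ I, deriv (Pfun ρ) t = 0 := by
    intro t ht
    have hev : Pfun ρ =ᶠ[nhds t] fun _ => (1 : ℝ) := by
      filter_upwards [hIopen.mem_nhds ht] with s hs using hP s hs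
    rw [hev.deriv_eq]; simp
  have hexp : ∀ t ∈ I, Real.exp (2 * ρ t) = Real.exp (2 * r) := by
    intro t ht; rw [hρconst t ht]
  constructor
  · intro h
    set c : ℝ := ((n : ℝ) - 1) * (μb * Real.exp (2 * r) - μ) / (3 * a ^ 2) with hc
    have key : ∀ t ∈ I,
        (a ^ 2 * Δ t * (1 - Δ t) + (a ^ 2 - μ * t) * t * deriv Δ t = 0) ∧
          Δ t = 1 - c * t := by
      intro t ht
      obtain ⟨hX, hY, hZ⟩ := h t ht
      simp only [Xfun] at hX
      simp only [Yfun] at hY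
      simp only [Zfun] at hZ
      rw [hP t ht, hP' t ht] at hX hY hZ
      rw [hexp t ht] at hX hY
      rw [neg_mul, neg_eq_zero] at hY hZ
      have ht0 : (0 : ℝ) < t := hIsub ht
      have hD := hΔpos t ht
      have hq := hμ t ht
      have hXn := (mul_eq_zero.mp hX).resolve_left (one_div_ne_zero (by positivity))
      have hYn := (mul_eq_zero.mp hY).resolve_left (one_div_ne_zero (by positivity))
      have hZn := (mul_eq_zero.mp hZ).resolve_left (one_div_ne_zero (by positivity))
      have hkey : ((n : ℝ) - 2) * Δ t *
          (a ^ 2 * Δ t * (1 - Δ t) + (a ^ 2 - μ * t) * t * deriv Δ t) = 0 := by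
        linear_combination hYn - hZn - (1 - Δ t) * hXn
      have hstar := (mul_eq_zero.mp hkey).resolve_left
        (mul_ne_zero (by linarith) hD.ne')
      refine ⟨hstar, ?_⟩
      have h3 : Δ t * (3 * a ^ 2 * (1 - Δ t)
          + ((n : ℝ) - 1) * (μ - μb * Real.exp (2 * r)) * t) = 0 := by
        linear_combination hXn + hstar
      have h4 := (mul_eq_zero.mp h3).resolve_left hD.ne'
      rw [hc]
      field_simp
      linear_combination -h4
    have hlin : ∀ t ∈ I, Δ t = 1 - c * t := fun t ht => (key t ht).2
    have hder : ∀ t ∈ I, deriv Δ t = -c := by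
      intro t ht
      have hev : Δ =ᶠ[nhds t] fun s => 1 - c * s := by
        filter_upwards [hIopen.mem_nhds ht] with s hs using hlin s hs
      rw [hev.deriv_eq]
      have : HasDerivAt (fun s : ℝ => 1 - c * s) (-(c * 1)) t :=
        ((hasDerivAt_id t).const_mul c).const_sub 1
      simpa using this.deriv
    obtain ⟨t0, ht0⟩ := hIne
    have ht0' : (0 : ℝ) < t0 := hIsub ht0
    have hs0 := (key t0 ht0).1
    rw [hlin t0 ht0, hder t0 ht0] at hs0
    have h6 : c * (μ - a ^ 2 * c) * t0 ^ 2 = 0 := by linear_combination hs0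
    have h7 : c * (μ - a ^ 2 * c) = 0 :=
      (mul_eq_zero.mp h6).resolve_right (pow_ne_zero 2 ht0'.ne')
    rcases mul_eq_zero.mp h7 with hc0 | hc0
    · left
      constructor
      · intro t ht; rw [hlin t ht, hc0]; ring
      · have h8 : ((n : ℝ) - 1) * (μb * Real.exp (2 * r) - μ) = 0 := by
          have h := hc0
          rw [hc, div_eq_zero_iff] at h
          rcases h with h | h
          · exact h
          · exact absurd h (by positivity)
        have h9 : μb * Real.exp (2 * r) - μ = 0 :=
          (mul_eq_zero.mp h8).resolve_left
            (ne_of_gt (by linarith : (0 : ℝ) < (n : ℝ) - 1))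
        rw [Real.exp_neg, eq_comm, inv_mul_eq_iff_eq_mul₀ hE, eq_comm] at *
        linarith [h9]
    · right
      have hμc : μ = a ^ 2 * c := by linarith
      constructor
      · intro t ht; rw [hlin t ht, hμc]; field_simp
      · have h8 : 3 * a ^ 2 * c = ((n : ℝ) - 1) * (μb * Real.exp (2 * r) - μ) := by
          rw [hc]; field_simp
        have h9 : μb * Real.exp (2 * r) * ((n : ℝ) - 1) = ((n : ℝ) + 2) * μ := by
          linear_combination -h8 - 3 * hμc
        have hn1 : ((n : ℝ) - 1) ≠ 0 := ne_of_gt (by linarith)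
        rw [Real.exp_neg]
        field_simp
        linear_combination h9
  · intro h
    rcases h with ⟨hΔ1, hμb⟩ | ⟨hΔ2, hμb⟩
    · intro t ht
      have ht0 : (0 : ℝ) < t := hIsub ht
      have hq := hμ t ht
      have hd1 : deriv Δ t = 0 := by
        have hev : Δ =ᶠ[nhds t] fun _ => (1 : ℝ) := by
          filter_upwards [hIopen.mem_nhds ht] with s hs using hΔ1 s hs
        rw [hev.deriv_eq]; simp
      have hd1' : ∀ s ∈ I, deriv Δ s = 0 := by
        intro s hs
        have hev : Δ =ᶠ[nhds s] fun _ => (1 : ℝ) := by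
          filter_upwards [hIopen.mem_nhds hs] with u hu using hΔ1 u hu
        rw [hev.deriv_eq]; simp
      have hd2 : deriv (deriv Δ) t = 0 := by
        have hev : deriv Δ =ᶠ[nhds t] fun _ => (0 : ℝ) := by
          filter_upwards [hIopen.mem_nhds ht] with s hs using hd1' s hs
        rw [hev.deriv_eq]; simp
      have hEE : Real.exp (-(2 * r)) * Real.exp (2 * r) = 1 := by
        rw [← Real.exp_add]; simp
      rw [Real.exp_neg] at hμb
      refine ⟨?_, ?_, ?_⟩
      · simp only [Xfun]
        rw [hP t ht, hP' t ht, hexp t ht, hΔ1 t ht, hd1, hμb]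
        apply mul_eq_zero_of_right
        field_simp
        ring
      · simp only [Yfun]
        rw [hP t ht, hP' t ht, hexp t ht, hΔ1 t ht, hd1, hd2, hμb]
        rw [neg_mul, neg_eq_zero]
        apply mul_eq_zero_of_right
        field_simp
        ring
      · simp only [Zfun]
        rw [hP t ht, hP' t ht, hΔ1 t ht, hd1, hd2]
        rw [neg_mul, neg_eq_zero]
        apply mul_eq_zero_of_right
        ring
    · intro t ht
      have ht0 : (0 : ℝ) < t := hIsub ht
      have hq := hμ t ht
      have hD := hΔpos t ht
      have hn1 : ((n : ℝ) - 1) ≠ 0 := by linarith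
      have hd1' : ∀ s ∈ I, deriv Δ s = -(μ / a ^ 2) := by
        intro s hs
        have hev : Δ =ᶠ[nhds s] fun u => 1 - μ * u / a ^ 2 := by
          filter_upwards [hIopen.mem_nhds hs] with u hu using hΔ2 u hu
        rw [hev.deriv_eq]
        have hh : HasDerivAt (fun u : ℝ => 1 - μ * u / a ^ 2)
            (-(μ / a ^ 2)) s := by
          have := (((hasDerivAt_id s).const_mul μ).div_const (a ^ 2)).const_sub 1
          simpa [mul_comm] using this
        exact hh.deriv
      have hd1 := hd1' t ht
      have hd2 : deriv (deriv Δ) t = 0 := by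
        have hev : deriv Δ =ᶠ[nhds t] fun _ => -(μ / a ^ 2) := by
          filter_upwards [hIopen.mem_nhds ht] with s hs using hd1' s hs
        rw [hev.deriv_eq]; simp
      have hEE : Real.exp (-(2 * r)) * Real.exp (2 * r) = 1 := by
        rw [← Real.exp_add]; simp
      have hΔt := hΔ2 t ht
      have hDne : Δ t ≠ 0 := hD.ne'
      rw [Real.exp_neg] at hμb
      refine ⟨?_, ?_, ?_⟩
      · simp only [Xfun]
        rw [hP t ht, hP' t ht, hexp t ht, hd1, hμb, hΔt]
        apply mul_eq_zero_of_right
        field_simp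
        ring
      · simp only [Yfun]
        rw [hP t ht, hP' t ht, hexp t ht, hd1, hd2, hμb, hΔt]
        rw [neg_mul, neg_eq_zero]
        apply mul_eq_zero_of_right
        field_simp
        ring
      · simp only [Zfun]
        rw [hP t ht, hP' t ht, hd1, hd2, hΔt]
        rw [neg_mul, neg_eq_zero]
        apply mul_eq_zero_of_right
        field_simp
        ring
end

section
/- Fix an integer n, real constants a ≠ 0, μ, μ̄, a real constant E, and a nonempty open interval I ⊆ (0, ∞). Let Δ, ρ : ℝ → ℝ be three times continuously differentiable on I with a² − μt > 0, 1 + E·t·e^{2ρ(t)} ≠ 0, P(t) := 1 + 2tρ'(t) ≠ 0, and Δ(t) = (a² − μt)·P(t)²/(a²·(1 + E·t·e^{2ρ(t)})) for all t ∈ I. Set ϱ(t) := t·e^{2ρ(t)}. Then X vanishes identically on I if and only if for all t ∈ I: 4(a² − μt)t²ϱϱ'' + (a² − μt)·(n − 7 + 3/(1 + Eϱ))·t²(ϱ')² + 2(2a² − 3μt)tϱϱ' − na²ϱ² + (n − 1)μ̄ϱ³ = 0. -/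
/-- ϱ(t) := t·e^{2ρ(t)}. -/
noncomputable def varrho (ρ : ℝ → ℝ) : ℝ → ℝ := fun t => t * Real.exp (2 * ρ t)

set_option maxHeartbeats 2000000 in
/-- After substituting the solution of T = 0, the equation X = 0 becomes a
    second-order ODE for ϱ = b²e^{2ρ} (Lemma 7.1). -/
theorem stmt17 (n : ℤ) (a μ μb E : ℝ) (ha : a ≠ 0)
    (I : Set ℝ) (hIopen : IsOpen I) (hIsub : I ⊆ Set.Ioi (0 : ℝ))
    (hIne : I.Nonempty) (Δ ρ : ℝ → ℝ)
    (hΔ : ContDiffOn ℝ 3 Δ I) (hρ : ContDiffOn ℝ 3 ρ I)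
    (hμ : ∀ t ∈ I, 0 < a ^ 2 - μ * t)
    (hE : ∀ t ∈ I, 1 + E * t * Real.exp (2 * ρ t) ≠ 0)
    (hP : ∀ t ∈ I, Pfun ρ t ≠ 0)
    (hΔeq : ∀ t ∈ I, Δ t =
      (a ^ 2 - μ * t) * Pfun ρ t ^ 2 /
        (a ^ 2 * (1 + E * t * Real.exp (2 * ρ t)))) :
    (∀ t ∈ I, Xfun n a μ μb Δ ρ t = 0) ↔
      ∀ t ∈ I,
        4 * (a ^ 2 - μ * t) * t ^ 2 * varrho ρ t * deriv (deriv (varrho ρ)) t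
          + (a ^ 2 - μ * t) * ((n : ℝ) - 7 + 3 / (1 + E * varrho ρ t)) * t ^ 2 *
              deriv (varrho ρ) t ^ 2
          + 2 * (2 * a ^ 2 - 3 * μ * t) * t * varrho ρ t * deriv (varrho ρ) t
          - (n : ℝ) * a ^ 2 * varrho ρ t ^ 2
          + ((n : ℝ) - 1) * μb * varrho ρ t ^ 3 = 0 := by
  have key : ∀ t ∈ I,
      4 * (a ^ 2 - μ * t) * t ^ 2 * varrho ρ t * deriv (deriv (varrho ρ)) t
        + (a ^ 2 - μ * t) * ((n : ℝ) - 7 + 3 / (1 + E * varrho ρ t)) * t ^ 2 *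
            deriv (varrho ρ) t ^ 2
        + 2 * (2 * a ^ 2 - 3 * μ * t) * t * varrho ρ t * deriv (varrho ρ) t
        - (n : ℝ) * a ^ 2 * varrho ρ t ^ 2
        + ((n : ℝ) - 1) * μb * varrho ρ t ^ 3
      = -(t ^ 3 * Real.exp (2 * ρ t) ^ 2) * Xfun n a μ μb Δ ρ t := by
    intro t ht
    have ht0 : (0:ℝ) < t := hIsub ht
    have htne : t ≠ 0 := ht0.ne'
    have hmem : I ∈ nhds t := hIopen.mem_nhds ht
    have hρdiff : ∀ s ∈ I, HasDerivAt ρ (deriv ρ s) s := fun s hs =>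
      ((hρ.contDiffAt (hIopen.mem_nhds hs)).differentiableAt (by norm_num)).hasDerivAt
    have hρ2 : ContDiffOn ℝ 2 (deriv ρ) I := hρ.deriv_of_isOpen hIopen (by norm_num)
    have hρ' : HasDerivAt ρ (deriv ρ t) t := hρdiff t ht
    have hρ'' : HasDerivAt (deriv ρ) (deriv (deriv ρ) t) t :=
      ((hρ2.contDiffAt hmem).differentiableAt (by norm_num)).hasDerivAt
    -- derivative of P
    have hPd : HasDerivAt (Pfun ρ) (2 * deriv ρ t + 2 * t * deriv (deriv ρ) t) t := by
      have h1 : HasDerivAt (fun s => 2 * s * deriv ρ s)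
          (2 * deriv ρ t + 2 * t * deriv (deriv ρ) t) t := by
        have h := ((hasDerivAt_id t).const_mul 2).fun_mul hρ''
        refine h.congr_deriv ?_
        simp only [id_eq]
        ring
      exact h1.const_add 1
    -- derivative of varrho on I
    have hvrAt : ∀ s ∈ I, HasDerivAt (varrho ρ)
        (Real.exp (2 * ρ s) * (1 + 2 * s * deriv ρ s)) s := by
      intro s hs
      have hexp : HasDerivAt (fun u => Real.exp (2 * ρ u))
          (Real.exp (2 * ρ s) * (2 * deriv ρ s)) s := ((hρdiff s hs).const_mul 2).exp
      have h2 := (hasDerivAt_id s).fun_mul hexp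
      have h3 : HasDerivAt (fun u => u * Real.exp (2 * ρ u))
          (Real.exp (2 * ρ s) * (1 + 2 * s * deriv ρ s)) s := by
        refine h2.congr_deriv ?_
        simp only [id_eq]
        ring
      exact h3
    have hvr1 : deriv (varrho ρ) t = Real.exp (2 * ρ t) * (1 + 2 * t * deriv ρ t) :=
      (hvrAt t ht).deriv
    -- second derivative of varrho
    have hexpT : HasDerivAt (fun u => Real.exp (2 * ρ u))
        (Real.exp (2 * ρ t) * (2 * deriv ρ t)) t := (hρ'.const_mul 2).exp
    have hlin : HasDerivAt (fun s => 1 + 2 * s * deriv ρ s)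
        (2 * deriv ρ t + 2 * t * deriv (deriv ρ) t) t := hPd
    have hvr2 : deriv (deriv (varrho ρ)) t =
        Real.exp (2 * ρ t) * (2 * deriv ρ t) * (1 + 2 * t * deriv ρ t)
          + Real.exp (2 * ρ t) * (2 * deriv ρ t + 2 * t * deriv (deriv ρ) t) := by
      have hev : deriv (varrho ρ) =ᶠ[nhds t]
          fun s => Real.exp (2 * ρ s) * (1 + 2 * s * deriv ρ s) := by
        filter_upwards [hmem] with s hs
        exact (hvrAt s hs).deriv
      rw [hev.deriv_eq]
      exact (hexpT.mul hlin).deriv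
    -- derivative of Δ
    have hQ : a ^ 2 * (1 + E * t * Real.exp (2 * ρ t)) ≠ 0 :=
      mul_ne_zero (pow_ne_zero 2 ha) (hE t ht)
    have hQd : HasDerivAt (fun s => a ^ 2 * (1 + E * s * Real.exp (2 * ρ s)))
        (a ^ 2 * (E * 1 * Real.exp (2 * ρ t)
          + E * t * (Real.exp (2 * ρ t) * (2 * deriv ρ t)))) t := by
      have h1 : HasDerivAt (fun s => E * s * Real.exp (2 * ρ s))
          (E * 1 * Real.exp (2 * ρ t)
            + E * t * (Real.exp (2 * ρ t) * (2 * deriv ρ t))) t :=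
        ((hasDerivAt_id t).const_mul E).mul hexpT
      exact (h1.const_add 1).const_mul (a ^ 2)
    have hNd : HasDerivAt (fun s => (a ^ 2 - μ * s) * Pfun ρ s ^ 2)
        ((-μ) * Pfun ρ t ^ 2
          + (a ^ 2 - μ * t) *
            (2 * Pfun ρ t * (2 * deriv ρ t + 2 * t * deriv (deriv ρ) t))) t := by
      have h1 : HasDerivAt (fun s => a ^ 2 - μ * s) (-μ) t := by
        simpa using ((hasDerivAt_id t).const_mul μ).const_sub (a ^ 2)
      have h2 : HasDerivAt (fun s => Pfun ρ s ^ 2)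
          (2 * Pfun ρ t * (2 * deriv ρ t + 2 * t * deriv (deriv ρ) t)) t := by
        have := hPd.fun_pow 2
        refine this.congr_deriv ?_
        ring
      exact h1.mul h2
    have hΔd : deriv Δ t =
        (((-μ) * Pfun ρ t ^ 2
            + (a ^ 2 - μ * t) *
              (2 * Pfun ρ t * (2 * deriv ρ t + 2 * t * deriv (deriv ρ) t)))
            * (a ^ 2 * (1 + E * t * Real.exp (2 * ρ t)))
          - ((a ^ 2 - μ * t) * Pfun ρ t ^ 2) *
            (a ^ 2 * (E * 1 * Real.exp (2 * ρ t)
              + E * t * (Real.exp (2 * ρ t) * (2 * deriv ρ t)))))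
          / (a ^ 2 * (1 + E * t * Real.exp (2 * ρ t))) ^ 2 := by
      have hev : Δ =ᶠ[nhds t] fun s =>
          (a ^ 2 - μ * s) * Pfun ρ s ^ 2
            / (a ^ 2 * (1 + E * s * Real.exp (2 * ρ s))) := by
        filter_upwards [hmem] with s hs
        exact hΔeq s hs
      rw [hev.deriv_eq]
      exact (hNd.div hQd hQ).deriv
    have hPt : Pfun ρ t = 1 + 2 * t * deriv ρ t := rfl
    have hvrt : varrho ρ t = t * Real.exp (2 * ρ t) := rfl
    have hPd' : deriv (Pfun ρ) t = 2 * deriv ρ t + 2 * t * deriv (deriv ρ) t := hPd.deriv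
    have hPne : 1 + 2 * t * deriv ρ t ≠ 0 := by
      have := hP t ht
      rwa [hPt] at this
    have hμt : a ^ 2 - μ * t ≠ 0 := (hμ t ht).ne'
    have hexpne : Real.exp (2 * ρ t) ≠ 0 := (Real.exp_pos _).ne'
    have hEne : 1 + E * t * Real.exp (2 * ρ t) ≠ 0 := hE t ht
    rw [Xfun]
    simp only [hvrt, hvr1, hvr2, hΔd, hPd', hΔeq t ht, hPt]
    have hEne' : 1 + E * (t * Real.exp (2 * ρ t)) ≠ 0 := by
      rwa [← mul_assoc]
    have hEne'' : 1 + t * Real.exp (2 * ρ t) * E ≠ 0 := by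
      convert hEne using 1; ring
    have hPne' : 1 + t * 2 * deriv ρ t ≠ 0 := by
      convert hPne using 1; ring
    field_simp
    ring
  constructor
  · intro h t ht
    rw [key t ht, h t ht, mul_zero]
  · intro h t ht
    have h0 := h t ht
    rw [key t ht] at h0
    have ht0 : (0:ℝ) < t := hIsub ht
    have hf : -(t ^ 3 * Real.exp (2 * ρ t) ^ 2) ≠ 0 := by
      have : (0:ℝ) < t ^ 3 * Real.exp (2 * ρ t) ^ 2 := by positivity
      simpa using this.ne'
    exact (mul_eq_zero.mp h0).resolve_left hf
end

section
/- (General Eguchi–Hanson deformation factors.) Fix an integer n > 2, a real constant a ≠ 0, set μ = 0 and μ̄ = 0, and let I ⊆ (0, ∞) be a nonempty open interval. Let C, D be real constants with C + D·t^{n/2} > 0 and C − D·t^{n/2} ≠ 0 for all t ∈ I, and define Δ(t) := ((C − D·t^{n/2})/(C + D·t^{n/2}))² and ρ(t) := −ln t + (2/n)·ln(C + D·t^{n/2}). Then X, Y, Z and T all vanish identically on I. -/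
set_option maxHeartbeats 2000000 in
/-- General Eguchi–Hanson deformation factors solve X = Y = Z = T = 0
    with μ = μ̄ = 0 (Example 8.1). -/
theorem stmt18 (n : ℤ) (hn : 2 < n) (a : ℝ) (ha : a ≠ 0)
    (I : Set ℝ) (hIopen : IsOpen I) (hIsub : I ⊆ Set.Ioi (0 : ℝ))
    (hIne : I.Nonempty) (C D : ℝ)
    (hpos : ∀ t ∈ I, 0 < C + D * t ^ ((n : ℝ) / 2))
    (hne : ∀ t ∈ I, C - D * t ^ ((n : ℝ) / 2) ≠ 0) :
    ∀ t ∈ I,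
      Xfun n a 0 0
          (fun s => ((C - D * s ^ ((n : ℝ) / 2)) / (C + D * s ^ ((n : ℝ) / 2))) ^ 2)
          (fun s => -Real.log s + (2 / (n : ℝ)) * Real.log (C + D * s ^ ((n : ℝ) / 2))) t = 0 ∧
      Yfun n a 0 0
          (fun s => ((C - D * s ^ ((n : ℝ) / 2)) / (C + D * s ^ ((n : ℝ) / 2))) ^ 2)
          (fun s => -Real.log s + (2 / (n : ℝ)) * Real.log (C + D * s ^ ((n : ℝ) / 2))) t = 0 ∧
      Zfun n a 0
          (fun s => ((C - D * s ^ ((n : ℝ) / 2)) / (C + D * s ^ ((n : ℝ) / 2))) ^ 2)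
          (fun s => -Real.log s + (2 / (n : ℝ)) * Real.log (C + D * s ^ ((n : ℝ) / 2))) t = 0 ∧
      Tfun a 0
          (fun s => ((C - D * s ^ ((n : ℝ) / 2)) / (C + D * s ^ ((n : ℝ) / 2))) ^ 2)
          (fun s => -Real.log s + (2 / (n : ℝ)) * Real.log (C + D * s ^ ((n : ℝ) / 2))) t = 0 := by
  intro t ht
  set e : ℝ := (n : ℝ) / 2 with he
  have hn0 : (n : ℝ) ≠ 0 := by
    have : (2:ℝ) < (n:ℝ) := by exact_mod_cast hn
    linarith
  have ht0 : (0:ℝ) < t := hIsub ht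
  have hu0 : C + D * t ^ e ≠ 0 := (hpos t ht).ne'
  have hPkey : ∀ s ∈ I, Pfun
      (fun s => -Real.log s + (2 / (n : ℝ)) * Real.log (C + D * s ^ e)) s
      = (D * s ^ e - C) / (C + D * s ^ e) := by
    intro s hs
    have hs0 : (0:ℝ) < s := hIsub hs
    have hus : C + D * s ^ e ≠ 0 := (hpos s hs).ne'
    have hw : HasDerivAt (fun x : ℝ => x ^ e) (e * s ^ (e-1)) s :=
      Real.hasDerivAt_rpow_const (Or.inl hs0.ne')
    have hu' : HasDerivAt (fun x : ℝ => C + D * x ^ e) (D * (e * s ^ (e-1))) s :=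
      (hw.const_mul D).const_add C
    have hrho : HasDerivAt
        (fun s => -Real.log s + (2 / (n : ℝ)) * Real.log (C + D * s ^ e))
        (-s⁻¹ + (2 / (n:ℝ)) * ((D * (e * s ^ (e-1))) / (C + D * s ^ e))) s :=
      (Real.hasDerivAt_log hs0.ne').neg.add ((hu'.log hus).const_mul (2/(n:ℝ)))
    have hse : s ^ e = s ^ (e-1) * s := by
      rw [← Real.rpow_add_one hs0.ne' (e-1)]; norm_num
    show 1 + 2 * s * _ = _
    rw [hrho.deriv, hse]
    rw [hse] at hus
    generalize s ^ (e-1) = w at hus ⊢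
    rw [he]
    have hC : C = (C + D * (w * s)) - D * (w * s) := by ring
    rw [hC]
    simp only [sub_add_cancel]
    generalize C + D * (w * s) = u at hus ⊢
    field_simp [hus]
    ring
  have hDkey : ∀ s ∈ I,
      deriv (fun s => ((C - D * s ^ e) / (C + D * s ^ e)) ^ 2) s
      = -(4*C*D*e) * (s ^ (e-1) * (C - D * s ^ e)) / (C + D * s ^ e) ^ 3 := by
    intro s hs
    have hs0 : (0:ℝ) < s := hIsub hs
    have hus : C + D * s ^ e ≠ 0 := (hpos s hs).ne'
    have hw : HasDerivAt (fun x : ℝ => x ^ e) (e * s ^ (e-1)) s :=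
      Real.hasDerivAt_rpow_const (Or.inl hs0.ne')
    have hu' : HasDerivAt (fun x : ℝ => C + D * x ^ e) (D * (e * s ^ (e-1))) s :=
      (hw.const_mul D).const_add C
    have hv' : HasDerivAt (fun x : ℝ => C - D * x ^ e) (-(D * (e * s ^ (e-1)))) s :=
      (hw.const_mul D).const_sub C
    have hDel := (hv'.div hu' hus).pow 2
    have hDel2 : HasDerivAt (fun x => ((C - D * x ^ e) / (C + D * x ^ e)) ^ 2) _ s := hDel
    rw [hDel2.deriv]
    simp only [Pi.div_apply]
    norm_num only [pow_one]
    have hC : C = (C + D * s ^ e) - D * s ^ e := by ring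
    rw [hC]
    simp only [sub_add_cancel]
    generalize C + D * s ^ e = u at hus ⊢
    field_simp [hus]
    ring
  have hw : HasDerivAt (fun x : ℝ => x ^ e) (e * t ^ (e-1)) t :=
    Real.hasDerivAt_rpow_const (Or.inl ht0.ne')
  have hw1 : HasDerivAt (fun x : ℝ => x ^ (e-1)) ((e-1) * t ^ (e-1-1)) t :=
    Real.hasDerivAt_rpow_const (Or.inl ht0.ne')
  have hu' : HasDerivAt (fun x : ℝ => C + D * x ^ e) (D * (e * t ^ (e-1))) t :=
    (hw.const_mul D).const_add C
  have hv' : HasDerivAt (fun x : ℝ => C - D * x ^ e) (-(D * (e * t ^ (e-1)))) t :=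
    (hw.const_mul D).const_sub C
  have hP : Pfun (fun s => -Real.log s + (2 / (n : ℝ)) * Real.log (C + D * s ^ e)) t
      = (D * t ^ e - C) / (C + D * t ^ e) := hPkey t ht
  have hP' : deriv (Pfun (fun s => -Real.log s + (2 / (n : ℝ)) * Real.log (C + D * s ^ e))) t
      = 2*C*D*e * t ^ (e-1) / (C + D * t ^ e) ^ 2 := by
    have hPev : Pfun (fun s => -Real.log s + (2 / (n : ℝ)) * Real.log (C + D * s ^ e))
        =ᶠ[nhds t] fun s => (D * s ^ e - C) / (C + D * s ^ e) :=
      Filter.eventuallyEq_of_mem (hIopen.mem_nhds ht) hPkey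
    have hnum : HasDerivAt (fun x : ℝ => D * x ^ e - C) (D * (e * t ^ (e-1))) t :=
      (hw.const_mul D).sub_const C
    have hPn := hnum.div hu' hu0
    have hPn2 : HasDerivAt (fun x => (D * x ^ e - C) / (C + D * x ^ e)) _ t := hPn
    rw [hPev.deriv_eq, hPn2.deriv]
    field_simp [hu0, ht0.ne']
    ring
  have hD' : deriv (fun s => ((C - D * s ^ e) / (C + D * s ^ e)) ^ 2) t
      = -(4*C*D*e) * (t ^ (e-1) * (C - D * t ^ e)) / (C + D * t ^ e) ^ 3 := hDkey t ht
  have hD'' : deriv (deriv (fun s => ((C - D * s ^ e) / (C + D * s ^ e)) ^ 2)) t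
      = -(4*C*D*e) *
          (((e-1) * t ^ (e-2) * (C - D * t ^ e)
              - D*e * (t ^ (e-1) * t ^ (e-1))) * (C + D * t ^ e)
            - 3 * (D*e * t ^ (e-1)) * (t ^ (e-1) * (C - D * t ^ e)))
          / (C + D * t ^ e) ^ 4 := by
    have hDev : deriv (fun s => ((C - D * s ^ e) / (C + D * s ^ e)) ^ 2)
        =ᶠ[nhds t] fun s => -(4*C*D*e) * (s ^ (e-1) * (C - D * s ^ e)) / (C + D * s ^ e) ^ 3 :=
      Filter.eventuallyEq_of_mem (hIopen.mem_nhds ht) hDkey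
    have hN := hw1.mul hv'
    have hNK := hN.const_mul (-(4*C*D*e))
    have hU3 := hu'.pow 3
    have hD1' := hNK.div hU3 (pow_ne_zero 3 hu0)
    have hD2 : HasDerivAt (fun s => -(4*C*D*e) * (s ^ (e-1) * (C - D * s ^ e)) / (C + D * s ^ e) ^ 3) _ t := hD1'
    rw [hDev.deriv_eq, hD2.deriv]
    simp only [Pi.mul_apply, Pi.pow_apply]
    have ht2 : t ^ (e-1-1) = t ^ (e-2) := by congr 1; ring
    rw [ht2]
    field_simp [hu0, ht0.ne']
    ring
  have hte1 : t ^ (e-1) = t ^ (e-2) * t := by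
    rw [← Real.rpow_add_one ht0.ne' (e-2)]; congr 1; ring
  have hte : t ^ e = t ^ (e-2) * t * t := by
    have h1 : t ^ e = t ^ (e-1) * t := by
      rw [← Real.rpow_add_one ht0.ne' (e-1)]; norm_num
    rw [h1, hte1]
  rw [hte] at hP hP' hD' hD'' hu0
  rw [hte1] at hP' hD' hD''
  refine ⟨?_, ?_, ?_, ?_⟩
  · simp only [Xfun]
    rw [hP, hP', hD', hte]
    apply mul_eq_zero_of_right
    rw [he] at hu0 ⊢
    generalize t ^ ((n:ℝ)/2-2) = B at hu0 ⊢
    have hC : C = (C + D * (B * t * t)) - D * (B * t * t) := by ring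
    rw [hC]
    simp only [sub_add_cancel]
    generalize C + D * (B * t * t) = u at hu0 ⊢
    field_simp [hu0, ht0.ne']
    ring
  · simp only [Yfun]
    rw [hP, hP', hD', hD'', hte]
    apply mul_eq_zero_of_right
    rw [he] at hu0 ⊢
    generalize t ^ ((n:ℝ)/2-2) = B at hu0 ⊢
    have hC : C = (C + D * (B * t * t)) - D * (B * t * t) := by ring
    rw [hC]
    simp only [sub_add_cancel]
    generalize C + D * (B * t * t) = u at hu0 ⊢
    field_simp [hu0, ht0.ne']
    ring
  · simp only [Zfun]
    rw [hP, hP', hD', hD'', hte]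
    apply mul_eq_zero_of_right
    rw [he] at hu0 ⊢
    generalize t ^ ((n:ℝ)/2-2) = B at hu0 ⊢
    have hC : C = (C + D * (B * t * t)) - D * (B * t * t) := by ring
    rw [hC]
    simp only [sub_add_cancel]
    generalize C + D * (B * t * t) = u at hu0 ⊢
    field_simp [hu0, ht0.ne']
    ring
  · simp only [Tfun]
    rw [hP, hP', hD', hte]
    rw [he] at hu0 ⊢
    generalize t ^ ((n:ℝ)/2-2) = B at hu0 ⊢
    have hC : C = (C + D * (B * t * t)) - D * (B * t * t) := by ring
    rw [hC]
    simp only [sub_add_cancel]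
    generalize C + D * (B * t * t) = u at hu0 ⊢
    field_simp [hu0, ht0.ne']
    ring
end

section
/- (Fubini–Study/Bergmann deformation factors.) Fix an integer n > 2, a real constant a ≠ 0, set μ = 0 and μ̄ = 4(n+2)CDa²/(n−1), and let I ⊆ (0, ∞) be a nonempty open interval. Let C, D be real constants with C + Dt > 0 and C − Dt ≠ 0 for all t ∈ I, and define Δ(t) := ((C − Dt)/(C + Dt))² and ρ(t) := −ln(C + Dt). Then X, Y, Z and T all vanish identically on I. -/
set_option maxHeartbeats 1000000 in
/-- Fubini–Study/Bergmann deformation factors solve X = Y = Z = T = 0 with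
    μ = 0 and μ̄ = 4(n+2)CDa²/(n−1) (Example 8.2). -/
theorem stmt19 (n : ℤ) (hn : 2 < n) (a : ℝ) (ha : a ≠ 0)
    (I : Set ℝ) (hIopen : IsOpen I) (hIsub : I ⊆ Set.Ioi (0 : ℝ))
    (hIne : I.Nonempty) (C D : ℝ)
    (hpos : ∀ t ∈ I, 0 < C + D * t)
    (hne : ∀ t ∈ I, C - D * t ≠ 0) :
    ∀ t ∈ I,
      Xfun n a 0 (4 * ((n : ℝ) + 2) * C * D * a ^ 2 / ((n : ℝ) - 1))
          (fun s => ((C - D * s) / (C + D * s)) ^ 2)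
          (fun s => -Real.log (C + D * s)) t = 0 ∧
      Yfun n a 0 (4 * ((n : ℝ) + 2) * C * D * a ^ 2 / ((n : ℝ) - 1))
          (fun s => ((C - D * s) / (C + D * s)) ^ 2)
          (fun s => -Real.log (C + D * s)) t = 0 ∧
      Zfun n a 0
          (fun s => ((C - D * s) / (C + D * s)) ^ 2)
          (fun s => -Real.log (C + D * s)) t = 0 ∧
      Tfun a 0
          (fun s => ((C - D * s) / (C + D * s)) ^ 2)
          (fun s => -Real.log (C + D * s)) t = 0 := by
  intro t ht
  have ht0 : (0:ℝ) < t := hIsub ht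
  have hu : 0 < C + D * t := hpos t ht
  have hune : C + D * t ≠ 0 := hu.ne'
  have hv : C - D * t ≠ 0 := hne t ht
  have hn1 : ((n : ℝ) - 1) ≠ 0 := by
    have : (2:ℝ) < (n:ℝ) := by exact_mod_cast hn
    nlinarith
  -- the open set where C + D * s ≠ 0
  set U : Set ℝ := {s | C + D * s ≠ 0} with hU
  have hUopen : IsOpen U := by
    have : U = (fun s => C + D * s) ⁻¹' {0}ᶜ := by
      ext s; simp [hU]
    rw [this]
    exact (isOpen_compl_singleton).preimage (by continuity)
  have htU : t ∈ U := hune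
  -- derivative of the affine map
  have haff : ∀ s : ℝ, HasDerivAt (fun x => C + D * x) D s := fun s => by
    simpa using ((hasDerivAt_id s).const_mul D).const_add C
  have haff2 : ∀ s : ℝ, HasDerivAt (fun x => C - D * x) (-D) s := fun s => by
    simpa using ((hasDerivAt_id s).const_mul D).const_sub C
  -- derivative of ρ on U
  have hρd : ∀ s ∈ U, HasDerivAt (fun x => -Real.log (C + D * x)) (-(D / (C + D * s))) s :=
    fun s hs => ((haff s).log hs).neg
  -- Pfun ρ agrees with (C - D s)/(C + D s) on U
  have hPeq : ∀ s ∈ U, Pfun (fun x => -Real.log (C + D * x)) s = (C - D * s) / (C + D * s) := by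
    intro s hs
    have hs' : C + D * s ≠ 0 := hs
    have := (hρd s hs).deriv
    simp only [Pfun, this]
    rw [eq_div_iff hs']
    linear_combination (-2 * s) * div_mul_cancel₀ D hs'
  -- derivative of q s = (C - D s)/(C + D s)
  have hq : ∀ s ∈ U, HasDerivAt (fun x => (C - D * x) / (C + D * x))
      (-(2 * C * D) / (C + D * s) ^ 2) s := by
    intro s hs
    have h := (haff2 s).fun_div (haff s) hs
    refine h.congr_deriv ?_
    field_simp
    ring
  -- derivative of Δ on U
  have hΔd : ∀ s ∈ U, HasDerivAt (fun x => ((C - D * x) / (C + D * x)) ^ 2)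
      (-(4 * C * D) * (C - D * s) / (C + D * s) ^ 3) s := by
    intro s hs
    have h := (hq s hs).fun_pow 2
    refine h.congr_deriv ?_
    rw [show (2:ℕ) - 1 = 1 from rfl, pow_one]
    generalize C + D * s = u
    ring
  have hΔ't : deriv (fun x => ((C - D * x) / (C + D * x)) ^ 2) t
      = -(4 * C * D) * (C - D * t) / (C + D * t) ^ 3 := (hΔd t htU).deriv
  -- eventual equality for deriv Δ and Pfun ρ
  have hev : deriv (fun x => ((C - D * x) / (C + D * x)) ^ 2)
      =ᶠ[nhds t] fun s => -(4 * C * D) * (C - D * s) / (C + D * s) ^ 3 := by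
    filter_upwards [hUopen.mem_nhds htU] with s hs
    exact (hΔd s hs).deriv
  have hevP : Pfun (fun x => -Real.log (C + D * x))
      =ᶠ[nhds t] fun s => (C - D * s) / (C + D * s) := by
    filter_upwards [hUopen.mem_nhds htU] with s hs
    exact hPeq s hs
  -- second derivative of Δ
  have hg : HasDerivAt (fun s => -(4 * C * D) * (C - D * s) / (C + D * s) ^ 3)
      (8 * C * D ^ 2 * (2 * C - D * t) / (C + D * t) ^ 4) t := by
    have hnum : HasDerivAt (fun s => -(4 * C * D) * (C - D * s)) (-(4 * C * D) * (-D)) t :=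
      (haff2 t).const_mul _
    have hden : HasDerivAt (fun s => (C + D * s) ^ 3) (3 * (C + D * t) ^ 2 * D) t := by
      have := (haff t).fun_pow 3
      exact this.congr_deriv (by norm_num)
    have hden0 : (C + D * t) ^ 3 ≠ 0 := pow_ne_zero _ hune
    have h := hnum.fun_div hden hden0
    refine h.congr_deriv ?_
    field_simp
    ring
  have hΔ''t : deriv (deriv (fun x => ((C - D * x) / (C + D * x)) ^ 2)) t
      = 8 * C * D ^ 2 * (2 * C - D * t) / (C + D * t) ^ 4 := by
    rw [hev.deriv_eq]
    exact hg.deriv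
  have hP't : deriv (Pfun (fun x => -Real.log (C + D * x))) t
      = -(2 * C * D) / (C + D * t) ^ 2 := by
    rw [hevP.deriv_eq]
    exact (hq t htU).deriv
  have hPt : Pfun (fun x => -Real.log (C + D * x)) t = (C - D * t) / (C + D * t) :=
    hPeq t htU
  have hexp : Real.exp (2 * -Real.log (C + D * t)) = 1 / (C + D * t) ^ 2 := by
    rw [show (2 : ℝ) * -Real.log (C + D * t) = -Real.log (C + D * t) + -Real.log (C + D * t) by
        ring, Real.exp_add, Real.exp_neg, Real.exp_log hu]
    field_simp
  refine ⟨?_, ?_, ?_, ?_⟩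
  · simp only [Xfun]
    rw [hPt, hP't, hΔ't, hexp]
    apply mul_eq_zero_of_right
    field_simp [hune, hn1]
    ring
  · simp only [Yfun]
    rw [hPt, hP't, hΔ't, hΔ''t, hexp]
    rw [neg_mul, neg_eq_zero]
    apply mul_eq_zero_of_right
    field_simp [hune, hn1]
    ring
  · simp only [Zfun]
    rw [hPt, hP't, hΔ't, hΔ''t]
    rw [neg_mul, neg_eq_zero]
    apply mul_eq_zero_of_right
    field_simp [hune]
    ring
  · simp only [Tfun]
    rw [hPt, hP't, hΔ't]
    field_simp [hune]
    ring
end
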